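/- Let X and Y be locally compact Hausdorff spaces, let E and F be real Banach spaces, and let T : C₀(X,E) → C₀(Y,F) be a linear isometry. Let x ∈ X and let μ ∈ E* with ‖μ‖ = 1 be such that the set S_{x,μ} = {f ∈ C₀(X,E) : μ(f(x)) = ‖f‖ = 1} is nonempty. Then there exist y ∈ Y and ν ∈ F* with ‖ν‖ = 1 such that ν((Tf)(y)) = 1 for every f ∈ S_{x,μ}. -/

import Mathlib

open ZeroAtInfty Set Metric Filter

/-! The set `S = {f | μ (f x) = 1 ∧ ‖f‖ = 1}` is convex, hence so is its image `T S`, which lies in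
the unit sphere of `C₀(Y, F)`. The average of finitely many members of `T S` again has norm one
and attains it at some point `y`, where then each of them has norm one; since the sets
`{y | 1 ≤ ‖g y‖}` are compact, a single `y` serves all of `T S`. The values at `y` form a convex
subset of the unit sphere of `F`, and separating it from the open unit ball gives `ν`. -/

namespace ZeroAtInftyContinuousMap

section Norm

variable {α β : Type*} [TopologicalSpace α] [SeminormedAddCommGroup β]

theorem norm_coe_le_norm (f : C₀(α, β)) (x : α) : ‖f x‖ ≤ ‖f‖ := by
  rw [← norm_toBCF_eq_norm]
  exact f.toBCF.norm_coe_le_norm x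

theorem norm_le {f : C₀(α, β)} {C : ℝ} (hC : 0 ≤ C) : ‖f‖ ≤ C ↔ ∀ x, ‖f x‖ ≤ C := by
  rw [← norm_toBCF_eq_norm]
  exact BoundedContinuousFunction.norm_le hC

theorem isCompact_setOf_le_norm (f : C₀(α, β)) {c : ℝ} (hc : 0 < c) :
    IsCompact {x | c ≤ ‖f x‖} := by
  have hsmall : {x | ‖f x‖ < c} ∈ cocompact α :=
    (zero_at_infty f).norm.eventually (gt_mem_nhds (by simpa using hc))
  obtain ⟨K, hK, hsub⟩ := mem_cocompact'.mp hsmall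
  refine hK.of_isClosed_subset (isClosed_le continuous_const (map_continuous f).norm) ?_
  simpa [compl_ofPred] using hsub

theorem exists_norm_apply_eq_norm (f : C₀(α, β)) (hf : 0 < ‖f‖) : ∃ x, ‖f x‖ = ‖f‖ := by
  obtain ⟨x₀, hx₀⟩ : ∃ x₀, 0 < ‖f x₀‖ := by
    by_contra! h
    exact hf.not_ge ((norm_le le_rfl).mpr h)
  have hsmall : ∀ᶠ x in cocompact α, ‖f x‖ ≤ ‖f x₀‖ :=
    (zero_at_infty f).norm.eventually (ge_mem_nhds (by simpa using hx₀))
  obtain ⟨x, hx⟩ := (map_continuous f).norm.exists_forall_ge' x₀ hsmall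
  exact ⟨x, le_antisymm (f.norm_coe_le_norm x) ((norm_le (norm_nonneg _)).mpr hx)⟩

end Norm

section Eval

variable (𝕜 : Type*) {α β : Type*} [NontriviallyNormedField 𝕜] [TopologicalSpace α]
  [SeminormedAddCommGroup β] [NormedSpace 𝕜 β]

noncomputable def evalCLM (x : α) : C₀(α, β) →L[𝕜] β :=
  LinearMap.mkContinuous
    { toFun f := f x
      map_add' _ _ := rfl
      map_smul' _ _ := rfl } 1
    fun f ↦ by simpa using f.norm_coe_le_norm x

@[simp]
theorem evalCLM_apply (x : α) (f : C₀(α, β)) : evalCLM 𝕜 x f = f x := rfl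

theorem norm_evalCLM_le (x : α) : ‖(evalCLM 𝕜 x : C₀(α, β) →L[𝕜] β)‖ ≤ 1 :=
  LinearMap.mkContinuous_norm_le _ zero_le_one _

end Eval

end ZeroAtInftyContinuousMap

section NormedSpace

variable {V : Type*} [SeminormedAddCommGroup V] [NormedSpace ℝ V]

theorem norm_eq_one_of_one_le_norm_sum_smul {ι : Type*} {s : Finset ι} {w : ι → ℝ} {v : ι → V}
    (hw : ∀ i ∈ s, 0 < w i) (hw₁ : ∑ i ∈ s, w i = 1) (hv : ∀ i ∈ s, ‖v i‖ ≤ 1)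
    (hsum : 1 ≤ ‖∑ i ∈ s, w i • v i‖) : ∀ i ∈ s, ‖v i‖ = 1 := by
  have hdefect : ∑ i ∈ s, w i * (1 - ‖v i‖) ≤ 0 := calc
    ∑ i ∈ s, w i * (1 - ‖v i‖) = 1 - ∑ i ∈ s, ‖w i • v i‖ := by
      simp only [mul_sub, mul_one, Finset.sum_sub_distrib, hw₁, norm_smul, Real.norm_eq_abs]
      congr 1
      exact Finset.sum_congr rfl fun i hi ↦ by rw [abs_of_pos (hw i hi)]
    _ ≤ 1 - ‖∑ i ∈ s, w i • v i‖ := by gcongr; exact norm_sum_le _ _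
    _ ≤ 0 := by linarith
  have hnonneg : ∀ i ∈ s, 0 ≤ w i * (1 - ‖v i‖) := fun i hi ↦
    mul_nonneg (hw i hi).le (by linarith [hv i hi])
  intro i hi
  have := (Finset.sum_eq_zero_iff_of_nonneg hnonneg).mp (le_antisymm hdefect
    (Finset.sum_nonneg hnonneg)) i hi
  rcases mul_eq_zero.mp this with h | h
  · exact absurd h (hw i hi).ne'
  · linarith

theorem convex_setOf_apply_eq_one_and_norm_eq_one {φ : StrongDual ℝ V} (hφ : ‖φ‖ ≤ 1) :
    Convex ℝ {v | φ v = 1 ∧ ‖v‖ = 1} := by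
  have hset : {v | φ v = 1 ∧ ‖v‖ = 1} = {v | φ v = 1} ∩ closedBall 0 1 := by
    ext v
    simp only [mem_ofPred_eq, mem_inter_iff, mem_closedBall_zero_iff]
    refine and_congr_right fun hv ↦ ⟨le_of_eq, fun hle ↦ le_antisymm hle ?_⟩
    calc 1 = φ v := hv.symm
      _ ≤ ‖φ‖ * ‖v‖ := le_of_abs_le (φ.le_opNorm v)
      _ ≤ ‖v‖ := mul_le_of_le_one_left (norm_nonneg v) hφ
  rw [hset]
  exact (convex_hyperplane φ.isLinear 1).inter (convex_closedBall 0 1)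

end NormedSpace

theorem exists_dual_eq_one_of_convex_subset_sphere {V : Type*} [NormedAddCommGroup V]
    [NormedSpace ℝ V] {D : Set V} (hD : Convex ℝ D) (hne : D.Nonempty) (hD₁ : D ⊆ sphere 0 1) :
    ∃ ν : StrongDual ℝ V, ‖ν‖ = 1 ∧ ∀ v ∈ D, ν v = 1 := by
  have hdisj : Disjoint (ball (0 : V) 1) D := by
    refine Set.disjoint_left.mpr fun v hv hvD ↦ ?_
    rw [mem_ball_zero_iff] at hv
    exact hv.ne (mem_sphere_zero_iff_norm.mp (hD₁ hvD))
  obtain ⟨f, u, hball, hDu⟩ := geometric_hahn_banach_open (convex_ball 0 1) isOpen_ball hD hdisj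
  have hu : 0 < u := by simpa using hball 0 (mem_ball_self one_pos)
  set ν := u⁻¹ • f
  have hν : ‖ν‖ ≤ 1 := by
    have hpolar : ν ∈ StrongDual.polar ℝ (ball (0 : V) 1) := by
      refine (StrongDual.mem_polar_iff ℝ _).mpr fun z hz ↦ ?_
      have hneg : -z ∈ ball (0 : V) 1 := by simpa using hz
      have h₁ := hball z hz
      have h₂ := hball (-z) hneg
      simp only [map_neg] at h₂
      simp only [ν, smul_apply, smul_eq_mul, norm_mul, norm_inv,
        Real.norm_eq_abs, abs_of_pos hu]
      rw [inv_mul_le_one₀ hu, abs_le]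
      constructor <;> linarith
    simpa [NormedSpace.polar_ball one_pos] using hpolar
  have hνD : ∀ v ∈ D, ν v = 1 := by
    intro v hv
    refine le_antisymm ?_ ?_
    · calc ν v ≤ ‖ν‖ * ‖v‖ := le_of_abs_le (ν.le_opNorm v)
        _ ≤ 1 := by rw [mem_sphere_zero_iff_norm.mp (hD₁ hv), mul_one]; exact hν
    · simpa [ν, one_le_inv_mul₀ hu] using hDu v hv
  obtain ⟨v₀, hv₀⟩ := hne
  refine ⟨ν, le_antisymm hν ?_, hνD⟩
  calc (1 : ℝ) = ν v₀ := (hνD v₀ hv₀).symm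
    _ ≤ ‖ν‖ * ‖v₀‖ := le_of_abs_le (ν.le_opNorm v₀)
    _ = ‖ν‖ := by rw [mem_sphere_zero_iff_norm.mp (hD₁ hv₀), mul_one]

namespace ZeroAtInftyContinuousMap

variable {Y F : Type*} [TopologicalSpace Y] [NormedAddCommGroup F] [NormedSpace ℝ F]

theorem exists_forall_norm_apply_eq_one_of_convex {C : Set C₀(Y, F)} (hC : Convex ℝ C)
    (hne : C.Nonempty) (hC₁ : ∀ g ∈ C, ‖g‖ = 1) : ∃ y, ∀ g ∈ C, ‖g y‖ = 1 := by
  classical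
  obtain ⟨g₀, hg₀⟩ := hne
  let K : C → Set Y := fun g ↦ {y | 1 ≤ ‖(g : C₀(Y, F)) y‖}
  have hK : ∀ g, IsCompact (K g) := fun g ↦ isCompact_setOf_le_norm _ one_pos
  have hfinite : ∀ u : Finset C, (K ⟨g₀, hg₀⟩ ∩ ⋂ g ∈ u, K g).Nonempty := by
    intro u
    set s : Finset C := insert ⟨g₀, hg₀⟩ u
    have hcard : (0 : ℝ) < s.card := by exact_mod_cast (Finset.insert_nonempty _ _).card_pos
    set h : C₀(Y, F) := ∑ g ∈ s, (s.card : ℝ)⁻¹ • (g : C₀(Y, F))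
    have hw₁ : ∑ _g ∈ s, (s.card : ℝ)⁻¹ = 1 := by
      rw [Finset.sum_const, nsmul_eq_mul, mul_inv_cancel₀ hcard.ne']
    have hh : ‖h‖ = 1 := hC₁ h (hC.sum_mem (fun _ _ ↦ by positivity) hw₁ fun g _ ↦ g.2)
    obtain ⟨y, hy⟩ := h.exists_norm_apply_eq_norm (by rw [hh]; exact one_pos)
    have hys : ∀ g ∈ s, 1 ≤ ‖(g : C₀(Y, F)) y‖ := by
      refine fun g hg ↦ (norm_eq_one_of_one_le_norm_sum_smul (fun _ _ ↦ inv_pos.mpr hcard) hw₁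
        (fun g _ ↦ (norm_coe_le_norm _ y).trans (hC₁ g g.2).le) ?_ g hg).ge
      have hhy : h y = ∑ g ∈ s, (s.card : ℝ)⁻¹ • (g : C₀(Y, F)) y := by
        change evalCLM ℝ y h = _
        simp [h]
      rw [← hh, ← hy, hhy]
    exact ⟨y, hys _ (Finset.mem_insert_self _ _),
      mem_iInter₂.mpr fun g hg ↦ hys g (Finset.mem_insert_of_mem hg)⟩
  obtain ⟨y, -, hy⟩ := (hK _).inter_iInter_nonempty K
    (fun g ↦ isClosed_le continuous_const (map_continuous _).norm) hfinite
  exact ⟨y, fun g hg ↦ le_antisymm ((norm_coe_le_norm g y).trans (hC₁ g hg).le)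
    (mem_iInter.mp hy ⟨g, hg⟩)⟩

theorem exists_dual_apply_eq_one_of_convex {C : Set C₀(Y, F)} (hC : Convex ℝ C)
    (hne : C.Nonempty) (hC₁ : ∀ g ∈ C, ‖g‖ = 1) :
    ∃ (y : Y) (ν : StrongDual ℝ F), ‖ν‖ = 1 ∧ ∀ g ∈ C, ν (g y) = 1 := by
  obtain ⟨y, hy⟩ := exists_forall_norm_apply_eq_one_of_convex hC hne hC₁
  obtain ⟨ν, hν, hνC⟩ := exists_dual_eq_one_of_convex_subset_sphere
    (hC.linear_image (evalCLM ℝ y).toLinearMap) (hne.image _)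
    (by rintro _ ⟨g, hg, rfl⟩; simpa using hy g hg)
  exact ⟨y, ν, hν, fun g hg ↦ hνC _ ⟨g, hg, rfl⟩⟩

end ZeroAtInftyContinuousMap

theorem Q_nonempty_general {X Y E F : Type*}
    [TopologicalSpace X]
    [TopologicalSpace Y]
    [NormedAddCommGroup E] [NormedSpace ℝ E]
    [NormedAddCommGroup F] [NormedSpace ℝ F]
    (T : C₀(X, E) →ₗᵢ[ℝ] C₀(Y, F))
    (x : X) (μ : StrongDual ℝ E) (hμ : ‖μ‖ = 1)
    (hS : ∃ f : C₀(X, E), μ (f x) = 1 ∧ ‖f‖ = 1) :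
    ∃ (y : Y) (ν : StrongDual ℝ F), ‖ν‖ = 1 ∧
      ∀ f : C₀(X, E), μ (f x) = 1 → ‖f‖ = 1 → ν (T f y) = 1 := by
  have hφ : ‖μ.comp (ZeroAtInftyContinuousMap.evalCLM ℝ x)‖ ≤ 1 := calc
    _ ≤ ‖μ‖ * ‖(ZeroAtInftyContinuousMap.evalCLM ℝ x : C₀(X, E) →L[ℝ] E)‖ := μ.opNorm_comp_le _
    _ ≤ 1 := by rw [hμ, one_mul]; exact ZeroAtInftyContinuousMap.norm_evalCLM_le ℝ x
  have hSconv : Convex ℝ {f : C₀(X, E) | μ (f x) = 1 ∧ ‖f‖ = 1} :=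
    convex_setOf_apply_eq_one_and_norm_eq_one hφ
  obtain ⟨y, ν, hν, hTS⟩ := ZeroAtInftyContinuousMap.exists_dual_apply_eq_one_of_convex
    (hSconv.linear_image T.toLinearMap) (Set.Nonempty.image T hS)
    (by rintro _ ⟨f, hf, rfl⟩; simpa using hf.2)
  exact ⟨y, ν, hν, fun f hfx hf ↦ hTS _ ⟨f, ⟨hfx, hf⟩, rfl⟩⟩

/-- If `T : C₀(X, E) → C₀(Y, F)` is a linear isometry and `S_{x,μ}` is nonempty for a
unit functional `μ ∈ E*`, then there are `y ∈ Y` and a unit functional `ν ∈ F*` such that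
`ν ((T f) y) = 1` for every `f ∈ S_{x,μ}`; i.e. the set `Q_{x,μ}` is nonempty. -/
theorem Q_nonempty {X Y E F : Type*}
    [TopologicalSpace X] [LocallyCompactSpace X] [T2Space X]
    [TopologicalSpace Y] [LocallyCompactSpace Y] [T2Space Y]
    [NormedAddCommGroup E] [NormedSpace ℝ E] [CompleteSpace E]
    [NormedAddCommGroup F] [NormedSpace ℝ F] [CompleteSpace F]
    (T : C₀(X, E) →ₗᵢ[ℝ] C₀(Y, F))
    (x : X) (μ : StrongDual ℝ E) (hμ : ‖μ‖ = 1)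
    (hS : ∃ f : C₀(X, E), μ (f x) = 1 ∧ ‖f‖ = 1) :
    ∃ (y : Y) (ν : StrongDual ℝ F), ‖ν‖ = 1 ∧
      ∀ f : C₀(X, E), μ (f x) = 1 → ‖f‖ = 1 → ν (T f y) = 1 :=
  Q_nonempty_general T x μ hμ hS
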